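/- Let H be a complex separable Hilbert space, let M be a POV measure on a measurable space (X, 𝒜), let P be a PV measure on a measurable space (Y, ℬ), and let ν be a weak Markov kernel with respect to M such that P = ν∘M. For B ∈ ℬ put π(B) := {x ∈ X : ν(x, B) = 1} (a measurable subset of X). Then for every B ∈ ℬ one has P(B) = M(π(B)), P(Y∖B) = M(π(Y∖B)) = M(X∖π(B)). -/

import Mathlib

open MeasureTheory ComplexOrder
open scoped Classical

noncomputable section

variable {H : Type*} [NormedAddCommGroup H] [InnerProductSpace ℂ H] [CompleteSpace H]

/-- A (normalized) positive operator valued measure on the measurable space `X`: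
`0 ≤ M A ≤ 1`, `M ∅ = 0`, `M univ = 1`, and `M` is weakly σ-additive. -/
structure IsPOVM {X : Type*} [MeasurableSpace X] (M : Set X → (H →L[ℂ] H)) : Prop where
  pos : ∀ A : Set X, MeasurableSet A → (M A).IsPositive
  le_one : ∀ A : Set X, MeasurableSet A → ((1 : H →L[ℂ] H) - M A).IsPositive
  empty : M ∅ = 0
  univ : M Set.univ = 1
  m_iUnion : ∀ (ψ : H) (A : ℕ → Set X), (∀ n, MeasurableSet (A n)) →
    Pairwise (Function.onFun Disjoint A) →
    HasSum (fun n => (inner ℂ ψ (M (A n) ψ) : ℂ)) (inner ℂ ψ (M (⋃ n, A n) ψ))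

/-- A projection valued (PV) measure: a POV measure whose values are orthogonal
projections (self-adjointness is part of positivity). -/
def IsPVM {X : Type*} [MeasurableSpace X] (M : Set X → (H →L[ℂ] H)) : Prop :=
  IsPOVM M ∧ ∀ A : Set X, MeasurableSet A → M A * M A = M A

/-- The finite measure `μ_ψ^M (A) = ⟨ψ, M(A) ψ⟩` associated to a POV measure `M`
and a vector `ψ`. (Junk value `0` if `M` is not a POV measure.) -/
def vecMeasure {X : Type*} [MeasurableSpace X] (M : Set X → (H →L[ℂ] H)) (ψ : H) :
    Measure X :=
  if hM : IsPOVM M then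
    Measure.ofMeasurable (fun A _ => ENNReal.ofReal (inner ℂ ψ (M A ψ) : ℂ).re)
      (by simp [hM.empty])
      (by
        intro A hA hd
        have h := hM.m_iUnion ψ A hA hd
        have hre : HasSum (fun n => ((inner ℂ ψ (M (A n) ψ) : ℂ)).re)
            ((inner ℂ ψ (M (⋃ n, A n) ψ) : ℂ)).re := h.mapL Complex.reCLM
        have hnn : ∀ n, 0 ≤ ((inner ℂ ψ (M (A n) ψ) : ℂ)).re := by
          intro n
          have h2 := (hM.pos (A n) (hA n)).2 ψ
          rw [ContinuousLinearMap.reApplyInnerSelf] at h2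
          simpa [inner_re_symm] using h2
        rw [← hre.tsum_eq]
        exact ENNReal.ofReal_tsum_of_nonneg hnn hre.summable)
  else 0

/-- `ν : X × ℬ → ℝ` is a weak Markov kernel with respect to the POV measure `M`. -/
def IsWeakMarkovKernel {X Y : Type*} [MeasurableSpace X] [MeasurableSpace Y]
    (M : Set X → (H →L[ℂ] H)) (ν : X → Set Y → ℝ) : Prop :=
  (∀ B : Set Y, MeasurableSet B → Measurable fun x => ν x B) ∧
  ∀ ψ : H,
    (∀ B : Set Y, MeasurableSet B →
      ∀ᵐ x ∂(vecMeasure M ψ), 0 ≤ ν x B ∧ ν x B ≤ 1) ∧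
    (∀ᵐ x ∂(vecMeasure M ψ), ν x Set.univ = 1) ∧
    (∀ᵐ x ∂(vecMeasure M ψ), ν x ∅ = 0) ∧
    (∀ B : ℕ → Set Y, (∀ n, MeasurableSet (B n)) → Pairwise (Function.onFun Disjoint B) →
      ∀ᵐ x ∂(vecMeasure M ψ), HasSum (fun n => ν x (B n)) (ν x (⋃ n, B n)))

/-- `F = ν ∘ M` : the POV measure `F` is the smearing of `M` with respect to `ν`. -/
def IsSmearing {X Y : Type*} [MeasurableSpace X] [MeasurableSpace Y]
    (M : Set X → (H →L[ℂ] H)) (ν : X → Set Y → ℝ) (F : Set Y → (H →L[ℂ] H)) : Prop :=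
  ∀ B : Set Y, MeasurableSet B → ∀ ψ : H,
    (inner ℂ ψ (F B ψ) : ℂ) = ((∫ x, ν x B ∂(vecMeasure M ψ) : ℝ) : ℂ)

/-- A weak Markov kernel has values in `{0,1}`. -/
def HasZeroOneValues {X Y : Type*} [MeasurableSpace X] [MeasurableSpace Y]
    (M : Set X → (H →L[ℂ] H)) (ν : X → Set Y → ℝ) : Prop :=
  ∀ B : Set Y, MeasurableSet B → ∀ ψ : H,
    ∀ᵐ x ∂(vecMeasure M ψ), ν x B = 0 ∨ ν x B = 1

/-! The smeared values `P B` are projections, so every `ψ` splits as `χ + φ` with `P B χ = χ` and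
`P B φ = 0`. Since `0 ≤ ν(·, B) ≤ 1`, the identity `⟨χ, χ⟩ = ∫ ν(·, B) dμ_χ ≤ μ_χ(X) = ‖χ‖²` forces
`ν(·, B) = 1` `μ_χ`-a.e., and likewise `ν(·, B) = 0` `μ_φ`-a.e. As `μ_ψ ≪ μ_χ + μ_φ`, the kernel
takes only the values `0, 1` `μ_ψ`-a.e., so it is the indicator of the level set `π(B)` and
`⟨ψ, P B ψ⟩ = μ_ψ(π(B)) = ⟨ψ, M(π(B)) ψ⟩`. The statement about complements then follows from
`P Bᶜ = 1 - P B` and `M π(B)ᶜ = 1 - M π(B)`. -/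

theorem ContinuousLinearMap.ext_inner_self_apply {E : Type*} [NormedAddCommGroup E]
    [InnerProductSpace ℂ E] {S T : E →L[ℂ] E}
    (h : ∀ ψ : E, inner ℂ ψ (S ψ) = inner ℂ ψ (T ψ)) : S = T :=
  ContinuousLinearMap.coe_injective <| (ext_inner_map _ _).mp fun ψ => by
    simp only [ContinuousLinearMap.coe_coe]
    rw [← inner_conj_symm, h, inner_conj_symm]

theorem ContinuousLinearMap.IsPositive.re_inner_add_apply_add_le {𝕜 E : Type*} [RCLike 𝕜]
    [NormedAddCommGroup E] [InnerProductSpace 𝕜 E] {T : E →L[𝕜] E} (hT : T.IsPositive)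
    (χ φ : E) :
    RCLike.re (inner 𝕜 (χ + φ) (T (χ + φ))) ≤
      2 * RCLike.re (inner 𝕜 χ (T χ)) + 2 * RCLike.re (inner 𝕜 φ (T φ)) := by
  have parallelogram : inner 𝕜 (χ + φ) (T (χ + φ)) + inner 𝕜 (χ - φ) (T (χ - φ)) =
      (2 : 𝕜) * inner 𝕜 χ (T χ) + 2 * inner 𝕜 φ (T φ) := by
    simp only [map_add, map_sub, inner_add_left, inner_add_right, inner_sub_left,
      inner_sub_right]
    ring
  have hre := congrArg RCLike.re parallelogram
  rw [map_add RCLike.re, map_add RCLike.re, RCLike.ofNat_mul_re, RCLike.ofNat_mul_re] at hre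
  linarith [hT.re_inner_nonneg_right (χ - φ)]

theorem MeasureTheory.ae_eq_one_of_integral_eq_measureReal_univ {X : Type*} [MeasurableSpace X]
    {μ : Measure X} [IsFiniteMeasure μ] {f : X → ℝ} (hf : Integrable f μ)
    (hf_le : ∀ᵐ x ∂μ, f x ≤ 1) (h : ∫ x, f x ∂μ = μ.real Set.univ) :
    ∀ᵐ x ∂μ, f x = 1 := by
  have hgap : ∫ x, (1 - f x) ∂μ = 0 := by
    rw [integral_sub (integrable_const 1) hf, integral_const, smul_eq_mul, mul_one, h, sub_self]
  have hgap_nonneg : 0 ≤ᵐ[μ] fun x => 1 - f x := hf_le.mono fun x hx => sub_nonneg.mpr hx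
  filter_upwards [(integral_eq_zero_iff_of_nonneg_ae hgap_nonneg
    ((integrable_const 1).sub hf)).mp hgap] with x hx
  exact (sub_eq_zero.mp hx).symm

theorem MeasureTheory.integral_eq_measureReal_of_ae_eq_zero_or_one {X : Type*}
    [MeasurableSpace X] {μ : Measure X} {f : X → ℝ} (hf : Measurable f)
    (h : ∀ᵐ x ∂μ, f x = 0 ∨ f x = 1) :
    ∫ x, f x ∂μ = μ.real {x | f x = 1} := by
  have hf_eq : f =ᵐ[μ] {x | f x = 1}.indicator 1 := h.mono fun x hx => by
    rcases hx with hx | hx <;> simp [Set.indicator, hx]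
  have hlevel : MeasurableSet {x | f x = 1} := hf (measurableSet_singleton 1)
  rw [integral_congr_ae hf_eq, integral_indicator_one hlevel]

section POVM

variable {E X : Type*} [NormedAddCommGroup E] [InnerProductSpace ℂ E] [MeasurableSpace X]
  {M : Set X → (E →L[ℂ] E)}

instance (M : Set X → (E →L[ℂ] E)) (ψ : E) : IsFiniteMeasure (vecMeasure M ψ) := by
  unfold vecMeasure
  split_ifs with hM
  · exact ⟨by rw [Measure.ofMeasurable_apply _ MeasurableSet.univ]; exact ENNReal.ofReal_lt_top⟩
  · infer_instance

theorem IsPOVM.inner_apply_eq_measureReal (hM : IsPOVM M) (ψ : E) {A : Set X}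
    (hA : MeasurableSet A) : inner ℂ ψ (M A ψ) = ((vecMeasure M ψ).real A : ℂ) := by
  have hnonneg : 0 ≤ inner ℂ ψ (M A ψ) := (hM.pos A hA).inner_nonneg_right ψ
  rw [measureReal_def, vecMeasure, dif_pos hM, Measure.ofMeasurable_apply A hA,
    ENNReal.toReal_ofReal (Complex.nonneg_iff.mp hnonneg).1]
  exact Complex.eq_re_of_ofReal_le hnonneg

theorem IsPOVM.apply_compl (hM : IsPOVM M) {A : Set X} (hA : MeasurableSet A) :
    M Aᶜ = 1 - M A := by
  refine ContinuousLinearMap.ext_inner_self_apply fun ψ => ?_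
  have huniv := hM.inner_apply_eq_measureReal ψ MeasurableSet.univ
  rw [hM.univ] at huniv
  rw [hM.inner_apply_eq_measureReal ψ hA.compl, measureReal_compl hA, Complex.ofReal_sub,
    ← huniv, ← hM.inner_apply_eq_measureReal ψ hA]
  exact (inner_sub_right ψ _ _).symm

theorem IsPOVM.vecMeasure_add_le (hM : IsPOVM M) (χ φ : E) :
    vecMeasure M (χ + φ) ≤ (2 : ENNReal) • (vecMeasure M χ + vecMeasure M φ) := by
  refine (Measure.le_iff).mpr fun A hA => ?_
  have hreal (ψ : E) : vecMeasure M ψ A = ENNReal.ofReal (RCLike.re (inner ℂ ψ (M A ψ))) := by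
    rw [hM.inner_apply_eq_measureReal ψ hA, RCLike.re_to_complex, Complex.ofReal_re,
      ofReal_measureReal]
  have hnonneg (ψ : E) : 0 ≤ RCLike.re (inner ℂ ψ (M A ψ)) :=
    (hM.pos A hA).re_inner_nonneg_right ψ
  rw [Measure.smul_apply, Measure.add_apply, hreal, hreal, hreal, ← ENNReal.ofReal_add
    (hnonneg χ) (hnonneg φ), smul_eq_mul, ← ENNReal.ofReal_ofNat 2,
    ← ENNReal.ofReal_mul zero_le_two, mul_add]
  exact ENNReal.ofReal_le_ofReal ((hM.pos A hA).re_inner_add_apply_add_le χ φ)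

theorem IsPOVM.vecMeasure_add_absolutelyContinuous (hM : IsPOVM M) (χ φ : E) :
    vecMeasure M (χ + φ) ≪ vecMeasure M χ + vecMeasure M φ :=
  Measure.absolutelyContinuous_of_le_smul (hM.vecMeasure_add_le χ φ)

end POVM

section Smearing

variable {E X Y : Type*} [NormedAddCommGroup E] [InnerProductSpace ℂ E] [MeasurableSpace X]
  [MeasurableSpace Y] {M : Set X → (E →L[ℂ] E)} {ν : X → Set Y → ℝ} {F : Set Y → (E →L[ℂ] E)}
  {B : Set Y}

theorem IsWeakMarkovKernel.integrable (hν : IsWeakMarkovKernel M ν) (hB : MeasurableSet B)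
    (ψ : E) : Integrable (fun x => ν x B) (vecMeasure M ψ) :=
  .of_bound (hν.1 B hB).aestronglyMeasurable 1 <| ((hν.2 ψ).1 B hB).mono fun _ hx =>
    abs_le.mpr ⟨by linarith [hx.1], hx.2⟩

theorem IsSmearing.ae_eq_one_of_apply_eq_self (hM : IsPOVM M) (hν : IsWeakMarkovKernel M ν)
    (hs : IsSmearing M ν F) (hB : MeasurableSet B) {χ : E} (hχ : F B χ = χ) :
    ∀ᵐ x ∂vecMeasure M χ, ν x B = 1 := by
  refine ae_eq_one_of_integral_eq_measureReal_univ (hν.integrable hB χ)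
    (((hν.2 χ).1 B hB).mono fun _ hx => hx.2) ?_
  have h : ((∫ x, ν x B ∂vecMeasure M χ : ℝ) : ℂ) = (vecMeasure M χ).real Set.univ := by
    rw [← hs B hB χ, ← hM.inner_apply_eq_measureReal χ .univ, hM.univ, hχ]
    rfl
  exact_mod_cast h

theorem IsSmearing.ae_eq_zero_of_apply_eq_zero (hν : IsWeakMarkovKernel M ν)
    (hs : IsSmearing M ν F) (hB : MeasurableSet B) {φ : E} (hφ : F B φ = 0) :
    ∀ᵐ x ∂vecMeasure M φ, ν x B = 0 := by
  have hzero : ∫ x, ν x B ∂vecMeasure M φ = 0 := by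
    have h := hs B hB φ
    rw [hφ, inner_zero_right] at h
    exact_mod_cast h.symm
  exact (integral_eq_zero_iff_of_nonneg_ae (((hν.2 φ).1 B hB).mono fun _ hx => hx.1)
    (hν.integrable hB φ)).mp hzero

theorem IsSmearing.hasZeroOneValues (hM : IsPOVM M) (hF : IsPVM F)
    (hν : IsWeakMarkovKernel M ν) (hs : IsSmearing M ν F) : HasZeroOneValues M ν := by
  intro B hB ψ
  have hχ : F B (F B ψ) = F B ψ := DFunLike.congr_fun (hF.2 B hB) ψ
  have hφ : F B (ψ - F B ψ) = 0 := by
    rw [map_sub, hχ, sub_self]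
  have hsplit : F B ψ + (ψ - F B ψ) = ψ := add_sub_cancel _ _
  have hac := hM.vecMeasure_add_absolutelyContinuous (F B ψ) (ψ - F B ψ)
  rw [hsplit] at hac
  refine hac.ae_le (ae_add_measure_iff.mpr ⟨?_, ?_⟩)
  · exact (hs.ae_eq_one_of_apply_eq_self hM hν hB hχ).mono fun _ hx => Or.inr hx
  · exact (hs.ae_eq_zero_of_apply_eq_zero hν hB hφ).mono fun _ hx => Or.inl hx

theorem IsSmearing.apply_eq_apply_setOf_eq_one (hM : IsPOVM M) (hs : IsSmearing M ν F)
    (h01 : HasZeroOneValues M ν) (hνB : Measurable fun x => ν x B) (hB : MeasurableSet B) :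
    F B = M {x | ν x B = 1} :=
  ContinuousLinearMap.ext_inner_self_apply fun ψ => by
    have hlevel : MeasurableSet {x | ν x B = 1} := hνB (measurableSet_singleton 1)
    rw [hs B hB ψ, integral_eq_measureReal_of_ae_eq_zero_or_one hνB (h01 B hB ψ),
      hM.inner_apply_eq_measureReal ψ hlevel]

end Smearing

theorem pv_smearing_eq_on_level_sets_general
    {X Y : Type*} [MeasurableSpace X] [MeasurableSpace Y]
    (M : Set X → (H →L[ℂ] H)) (hM : IsPOVM M)
    (P : Set Y → (H →L[ℂ] H)) (hP : IsPVM P)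
    (ν : X → Set Y → ℝ) (hν : IsWeakMarkovKernel M ν) (hs : IsSmearing M ν P) :
    ∀ B : Set Y, MeasurableSet B →
      P B = M {x : X | ν x B = 1} ∧
      P Bᶜ = M {x : X | ν x Bᶜ = 1} ∧
      M {x : X | ν x Bᶜ = 1} = M ({x : X | ν x B = 1}ᶜ) := by
  have h01 := hs.hasZeroOneValues hM hP hν
  have hlevel : ∀ B : Set Y, MeasurableSet B → P B = M {x : X | ν x B = 1} := fun B hB =>
    hs.apply_eq_apply_setOf_eq_one hM h01 (hν.1 B hB) hB
  intro B hB
  have hπB : MeasurableSet {x : X | ν x B = 1} := hν.1 B hB (measurableSet_singleton 1)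
  refine ⟨hlevel B hB, hlevel Bᶜ hB.compl, ?_⟩
  rw [← hlevel Bᶜ hB.compl, hP.1.apply_compl hB, hlevel B hB, hM.apply_compl hπB]

/-- If `P = ν ∘ M` with `P` a PV measure, then with
`π(B) := {x : ν(x,B) = 1}` one has `P(B) = M(π(B))` and
`P(Bᶜ) = M(π(Bᶜ)) = M(π(B)ᶜ)`. -/
theorem pv_smearing_eq_on_level_sets
    [TopologicalSpace.SeparableSpace H]
    {X Y : Type*} [MeasurableSpace X] [MeasurableSpace Y]
    (M : Set X → (H →L[ℂ] H)) (hM : IsPOVM M)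
    (P : Set Y → (H →L[ℂ] H)) (hP : IsPVM P)
    (ν : X → Set Y → ℝ) (hν : IsWeakMarkovKernel M ν) (hs : IsSmearing M ν P) :
    ∀ B : Set Y, MeasurableSet B →
      P B = M {x : X | ν x B = 1} ∧
      P Bᶜ = M {x : X | ν x Bᶜ = 1} ∧
      M {x : X | ν x Bᶜ = 1} = M ({x : X | ν x B = 1}ᶜ) :=
  pv_smearing_eq_on_level_sets_general M hM P hP ν hν hs

end
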